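/- arXiv:1609.08251 — 3 statements merged into one kernel-verified Lean document; each statement's English description precedes it below -/
import Mathlib

section
/- Let W, V ∈ ℝ^{n×k} each have orthonormal columns and suppose ‖WWᵀ − VVᵀ‖₂ ≤ ε with ε ≤ 1/2. Then there exists an orthogonal matrix Q ∈ O(k) such that ‖W − VQ‖_F ≤ 2√k·ε. -/
open Matrix BigOperators

noncomputable def vecNorm {m : ℕ} (v : Fin m → ℝ) : ℝ :=
  Real.sqrt (∑ i, v i ^ 2)

noncomputable def frobNorm {m n : ℕ} (A : Matrix (Fin m) (Fin n) ℝ) : ℝ :=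
  Real.sqrt (∑ i, ∑ j, A i j ^ 2)

/-- spectral (operator) norm w.r.t. Euclidean norms -/
noncomputable def specNorm {m n : ℕ} (A : Matrix (Fin m) (Fin n) ℝ) : ℝ :=
  sSup {r | ∃ x : Fin n → ℝ, vecNorm x ≤ 1 ∧ r = vecNorm (A.mulVec x)}

/-- smallest singular value (for matrices with at least as many rows as columns) -/
noncomputable def sMin {m n : ℕ} (A : Matrix (Fin m) (Fin n) ℝ) : ℝ :=
  sInf {r | ∃ x : Fin n → ℝ, vecNorm x = 1 ∧ r = vecNorm (A.mulVec x)}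

lemma vecNorm_eq_sqrt_dot {m : ℕ} (v : Fin m → ℝ) : vecNorm v = Real.sqrt (v ⬝ᵥ v) := by
  simp [vecNorm, dotProduct, sq]

lemma dot_self_nonneg {m : ℕ} (v : Fin m → ℝ) : 0 ≤ v ⬝ᵥ v :=
  Finset.sum_nonneg fun i _ => mul_self_nonneg (v i)

lemma mulVec_dot {m n : ℕ} (B : Matrix (Fin m) (Fin n) ℝ) (x : Fin n → ℝ) :
    (B *ᵥ x) ⬝ᵥ (B *ᵥ x) = x ⬝ᵥ ((Bᵀ * B) *ᵥ x) := by
  rw [← mulVec_mulVec, dotProduct_mulVec x, vecMul_transpose, dotProduct_comm]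

lemma specSet_bddAbove {m n : ℕ} (A : Matrix (Fin m) (Fin n) ℝ) :
    BddAbove {r | ∃ x : Fin n → ℝ, vecNorm x ≤ 1 ∧ r = vecNorm (A.mulVec x)} := by
  refine ⟨frobNorm A, ?_⟩
  rintro r ⟨x, hx, rfl⟩
  have hx2 : ∑ j, x j ^ 2 ≤ 1 := by
    have h := Real.sq_sqrt (Finset.sum_nonneg (fun j _ => sq_nonneg (x j)) :
      (0:ℝ) ≤ ∑ j, x j ^ 2)
    have : Real.sqrt (∑ j, x j ^ 2) ≤ 1 := hx
    nlinarith [Real.sqrt_nonneg (∑ j, x j ^ 2)]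
  unfold vecNorm frobNorm
  apply Real.sqrt_le_sqrt
  have key : ∀ i, (A.mulVec x i) ^ 2 ≤ ∑ j, A i j ^ 2 := by
    intro i
    have cs := Finset.sum_mul_sq_le_sq_mul_sq Finset.univ (fun j => A i j) x
    have : (∑ j, A i j * x j) ^ 2 ≤ (∑ j, A i j ^ 2) * 1 := by
      refine le_trans cs ?_
      exact mul_le_mul_of_nonneg_left hx2 (Finset.sum_nonneg fun j _ => sq_nonneg _)
    simpa [Matrix.mulVec, dotProduct] using this
  exact Finset.sum_le_sum fun i _ => key i

lemma frobNorm_eq_sqrt_trace {m n : ℕ} (B : Matrix (Fin m) (Fin n) ℝ) :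
    frobNorm B = Real.sqrt ((Bᵀ * B).trace) := by
  unfold frobNorm
  congr 1
  rw [Matrix.trace, Finset.sum_comm]
  simp [Matrix.mul_apply, Matrix.diag, sq]

lemma eigvec_dot_one {k : ℕ} {H : Matrix (Fin k) (Fin k) ℝ} (hH : H.IsHermitian) (i : Fin k) :
    (⇑(hH.eigenvectorBasis i) : Fin k → ℝ) ⬝ᵥ ⇑(hH.eigenvectorBasis i) = 1 := by
  have hn : ‖hH.eigenvectorBasis i‖ = 1 := hH.eigenvectorBasis.orthonormal.1 i
  have h2 : ‖hH.eigenvectorBasis i‖ ^ 2 = 1 := by rw [hn]; norm_num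
  rw [EuclideanSpace.norm_eq] at h2
  rw [Real.sq_sqrt (Finset.sum_nonneg fun j _ => sq_nonneg _)] at h2
  simpa [dotProduct, sq] using h2

lemma expand_sub {n k : ℕ} (W V : Matrix (Fin n) (Fin k) ℝ) (R : Matrix (Fin k) (Fin k) ℝ)
    (hW : Wᵀ * W = 1) (hV : Vᵀ * V = 1) :
    (W - V * R)ᵀ * (W - V * R) = 1 - (Wᵀ * V) * R - Rᵀ * (Vᵀ * W) + Rᵀ * R := by
  rw [transpose_sub, transpose_mul, Matrix.sub_mul, Matrix.mul_sub, Matrix.mul_sub,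
    hW, Matrix.mul_assoc Rᵀ Vᵀ W, ← Matrix.mul_assoc Wᵀ V R,
    Matrix.mul_assoc Rᵀ Vᵀ (V * R), ← Matrix.mul_assoc Vᵀ V R, hV, Matrix.one_mul]
  abel

/-- If W, V have orthonormal columns and their spectral projectors
are within ε ≤ 1/2 in spectral norm, then there is an orthogonal Q with
‖W − VQ‖_F ≤ 2√k·ε. -/
theorem close_projectors_close_bases
    (n k : ℕ) (ε : ℝ)
    (W V : Matrix (Fin n) (Fin k) ℝ)
    (hW : Wᵀ * W = 1) (hV : Vᵀ * V = 1)
    (hproj : specNorm (W * Wᵀ - V * Vᵀ) ≤ ε)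
    (hε : ε ≤ 1 / 2) :
    ∃ Q : Matrix (Fin k) (Fin k) ℝ, Qᵀ * Q = 1 ∧
      frobNorm (W - V * Q) ≤ 2 * Real.sqrt k * ε := by
  classical
  have hbdd := specSet_bddAbove (W * Wᵀ - V * Vᵀ)
  have hε0 : 0 ≤ ε := by
    refine le_trans ?_ hproj
    refine le_csSup hbdd ⟨0, by simp [vecNorm], by simp [vecNorm]⟩
  set M : Matrix (Fin k) (Fin k) ℝ := Vᵀ * W with hMdef
  set H : Matrix (Fin k) (Fin k) ℝ := Mᵀ * M with hHdef
  have hHsymm : H.IsHermitian := by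
    have : (Mᵀ * M).IsHermitian := by simpa using isHermitian_conjTranspose_mul_self M
    exact hHdef ▸ this
  have hWV : Wᵀ * V = Mᵀ := by rw [hMdef, transpose_mul, transpose_transpose]
  -- key quadratic-form bound
  have key : ∀ x : Fin k → ℝ, x ⬝ᵥ x = 1 → 1 - ε ^ 2 ≤ x ⬝ᵥ (H *ᵥ x) := by
    intro x hx
    have hWx : vecNorm (W *ᵥ x) = 1 := by
      rw [vecNorm_eq_sqrt_dot, mulVec_dot, hW, one_mulVec, hx, Real.sqrt_one]
    have hmem : vecNorm ((W * Wᵀ - V * Vᵀ) *ᵥ (W *ᵥ x)) ≤ ε :=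
      le_trans (le_csSup hbdd ⟨W *ᵥ x, le_of_eq hWx, rfl⟩) hproj
    have hAW : (W * Wᵀ - V * Vᵀ) * W = W - V * M := by
      rw [Matrix.sub_mul, Matrix.mul_assoc, hW, Matrix.mul_one, Matrix.mul_assoc, ← hMdef]
    rw [show (W * Wᵀ - V * Vᵀ) *ᵥ (W *ᵥ x) = (W - V * M) *ᵥ x by
      rw [mulVec_mulVec, hAW]] at hmem
    have hdnn : (0:ℝ) ≤ ((W - V * M) *ᵥ x) ⬝ᵥ ((W - V * M) *ᵥ x) := dot_self_nonneg _
    have hsq : ((W - V * M) *ᵥ x) ⬝ᵥ ((W - V * M) *ᵥ x) ≤ ε ^ 2 := by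
      rw [vecNorm_eq_sqrt_dot] at hmem
      nlinarith [Real.sq_sqrt hdnn, Real.sqrt_nonneg (((W - V * M) *ᵥ x) ⬝ᵥ ((W - V * M) *ᵥ x))]
    rw [mulVec_dot, expand_sub W V M hW hV, hWV, ← hMdef, ← hHdef] at hsq
    rw [show (1 - Mᵀ * M - H + H : Matrix (Fin k) (Fin k) ℝ) = 1 - H by
      rw [← hHdef]; abel] at hsq
    rw [sub_mulVec, dotProduct_sub, one_mulVec, hx] at hsq
    linarith
  set μ : Fin k → ℝ := hHsymm.eigenvalues with hμdef
  have hμlb : ∀ i, 1 - ε ^ 2 ≤ μ i := by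
    intro i
    have hv1 := eigvec_dot_one hHsymm i
    have hk := key _ hv1
    rw [hHsymm.mulVec_eigenvectorBasis] at hk
    simpa [dotProduct_smul, smul_eq_mul, ← Finset.mul_sum, hv1] using hk
  have hquarter : ε ^ 2 ≤ 1 / 4 := by nlinarith
  have hμpos : ∀ i, (0:ℝ) < μ i := fun i => lt_of_lt_of_le (by nlinarith) (hμlb i)
  set U : Matrix (Fin k) (Fin k) ℝ := (hHsymm.eigenvectorUnitary : Matrix (Fin k) (Fin k) ℝ)
    with hUdef
  have hU1 : Uᵀ * U = 1 := by
    have := (hHsymm.eigenvectorUnitary).2.1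
    simpa [star_eq_conjTranspose, hUdef] using this
  have hU2 : U * Uᵀ = 1 := by
    have := (hHsymm.eigenvectorUnitary).2.2
    simpa [star_eq_conjTranspose, hUdef] using this
  have hspec : H = U * diagonal μ * Uᵀ := by
    have := hHsymm.spectral_theorem
    simpa [star_eq_conjTranspose, Function.comp, hUdef, hμdef] using this
  set s : Fin k → ℝ := fun i => Real.sqrt (μ i) with hsdef
  have hspos : ∀ i, 0 < s i := fun i => Real.sqrt_pos.2 (hμpos i)
  set P : Matrix (Fin k) (Fin k) ℝ := U * diagonal s * Uᵀ with hPdef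
  set Pi : Matrix (Fin k) (Fin k) ℝ := U * diagonal (fun i => (s i)⁻¹) * Uᵀ with hPidef
  have hdd : diagonal s * diagonal s = diagonal μ := by
    rw [diagonal_mul_diagonal]
    exact congrArg diagonal (funext fun i => Real.mul_self_sqrt (le_of_lt (hμpos i)))
  have hddi : diagonal (fun i => (s i)⁻¹) * diagonal s = 1 := by
    rw [diagonal_mul_diagonal]
    rw [show (fun i => (s i)⁻¹ * s i) = fun _ => (1:ℝ) from
      funext fun i => inv_mul_cancel₀ (ne_of_gt (hspos i))]
    exact diagonal_one
  have hddi' : diagonal s * diagonal (fun i => (s i)⁻¹) = 1 := by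
    rw [diagonal_mul_diagonal]
    rw [show (fun i => s i * (s i)⁻¹) = fun _ => (1:ℝ) from
      funext fun i => mul_inv_cancel₀ (ne_of_gt (hspos i))]
    exact diagonal_one
  have hPP : P * P = H := by
    rw [hPdef, hspec]
    simp only [Matrix.mul_assoc]
    rw [← Matrix.mul_assoc Uᵀ U, hU1, Matrix.one_mul,
      ← Matrix.mul_assoc (diagonal s) (diagonal s), hdd]
  have hPiP : Pi * P = 1 := by
    rw [hPidef, hPdef]
    simp only [Matrix.mul_assoc]
    rw [← Matrix.mul_assoc Uᵀ U, hU1, Matrix.one_mul,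
      ← Matrix.mul_assoc (diagonal fun i => (s i)⁻¹) (diagonal s), hddi, Matrix.one_mul, hU2]
  have hPPi : P * Pi = 1 := by
    rw [hPidef, hPdef]
    simp only [Matrix.mul_assoc]
    rw [← Matrix.mul_assoc Uᵀ U, hU1, Matrix.one_mul,
      ← Matrix.mul_assoc (diagonal s) (diagonal fun i => (s i)⁻¹), hddi', Matrix.one_mul, hU2]
  have hPt : Pᵀ = P := by
    rw [hPdef, transpose_mul, transpose_mul, transpose_transpose, diagonal_transpose,
      Matrix.mul_assoc]
  have hPit : Piᵀ = Pi := by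
    rw [hPidef, transpose_mul, transpose_mul, transpose_transpose, diagonal_transpose,
      Matrix.mul_assoc]
  refine ⟨M * Pi, ?_, ?_⟩
  · rw [transpose_mul, hPit, Matrix.mul_assoc, ← Matrix.mul_assoc Mᵀ M, ← hHdef, ← hPP]
    rw [Matrix.mul_assoc P P Pi, hPPi, Matrix.mul_one, hPiP]
  · have hQtM : (M * Pi)ᵀ * M = P := by
      rw [transpose_mul, hPit, Matrix.mul_assoc, ← hHdef, ← hPP, ← Matrix.mul_assoc Pi P P,
        hPiP, Matrix.one_mul]
    have hQQ : (M * Pi)ᵀ * (M * Pi) = 1 := by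
      rw [transpose_mul, hPit, Matrix.mul_assoc, ← Matrix.mul_assoc Mᵀ M, ← hHdef, ← hPP]
      rw [Matrix.mul_assoc P P Pi, hPPi, Matrix.mul_one, hPiP]
    have hMtQ : Mᵀ * (M * Pi) = P := by
      have h := congrArg Matrix.transpose hQtM
      rw [transpose_mul, transpose_transpose, hPt] at h
      exact h
    have htrP : P.trace = ∑ i, s i := by
      rw [hPdef, trace_mul_cycle, hU1, Matrix.one_mul, trace_diagonal]
    have htrP_lb : (k : ℝ) * Real.sqrt (1 - ε ^ 2) ≤ P.trace := by
      rw [htrP]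
      calc (k : ℝ) * Real.sqrt (1 - ε ^ 2) = ∑ _i : Fin k, Real.sqrt (1 - ε ^ 2) := by
            simp [Finset.sum_const, mul_comm]
        _ ≤ ∑ i, s i := Finset.sum_le_sum fun i _ => Real.sqrt_le_sqrt (hμlb i)
    have hE : (W - V * (M * Pi))ᵀ * (W - V * (M * Pi)) = 1 - P - P + 1 := by
      rw [expand_sub W V (M * Pi) hW hV, hWV, ← hMdef]
      rw [show Mᵀ * (M * Pi) = P from hMtQ, hQtM, hQQ]
    rw [frobNorm_eq_sqrt_trace, hE]
    have htr : (1 - P - P + 1 : Matrix (Fin k) (Fin k) ℝ).trace = 2 * k - 2 * P.trace := by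
      simp only [trace_add, trace_sub, trace_one, Fintype.card_fin]
      ring
    rw [htr]
    have h1e : (0:ℝ) ≤ 1 - ε ^ 2 := by nlinarith
    have hs1 : Real.sqrt (1 - ε ^ 2) ≤ 1 := Real.sqrt_le_one.mpr (by nlinarith)
    have hsq1 : 1 - ε ^ 2 ≤ Real.sqrt (1 - ε ^ 2) := by
      nlinarith [Real.sq_sqrt h1e, Real.sqrt_nonneg (1 - ε ^ 2)]
    have hk0 : (0:ℝ) ≤ (k : ℝ) := Nat.cast_nonneg k
    have hsqk : Real.sqrt (k : ℝ) ^ 2 = (k : ℝ) := Real.sq_sqrt hk0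
    have hbound : 2 * (k : ℝ) - 2 * P.trace ≤ (2 * Real.sqrt k * ε) ^ 2 := by
      nlinarith [htrP_lb, mul_le_mul_of_nonneg_left hsq1 hk0, sq_nonneg ε,
        mul_nonneg hk0 (sq_nonneg ε)]
    calc Real.sqrt (2 * (k:ℝ) - 2 * P.trace) ≤ Real.sqrt ((2 * Real.sqrt k * ε) ^ 2) :=
          Real.sqrt_le_sqrt hbound
      _ = 2 * Real.sqrt k * ε := Real.sqrt_sq (by positivity)
end

section
/- Let W, V ∈ ℝ^{n×k} have orthonormal columns with ‖WWᵀ − VVᵀ‖₂ ≤ ε. Suppose 𝒞 ⊆ {1,…,n} is a set of k indices such that the k×k matrix (Vᵀ)_{:,𝒞} (the submatrix of Vᵀ formed by the columns indexed by 𝒞) has smallest singular value strictly greater than ε. Then the k×k matrix (Wᵀ)_{:,𝒞} is invertible, and hence the columns of WWᵀ indexed by 𝒞 span the column space of W. -/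
open Matrix BigOperators

/-! Let `P` be the `n × k` matrix selecting the coordinates `c`; it has orthonormal columns, and
`(Wᵀ)_{:,c} = Wᵀ P`. Since `W` has orthonormal columns, `‖Wᵀ y‖ = ‖W Wᵀ y‖`, and likewise for `V`.
So for a unit vector `x`, with `y = P x` also a unit vector,
`ε < σ_min((Vᵀ)_{:,c}) ≤ ‖V Vᵀ y‖ ≤ ‖W Wᵀ y‖ + ‖W Wᵀ - V Vᵀ‖ ≤ ‖(Wᵀ)_{:,c} x‖ + ε`,
hence `(Wᵀ)_{:,c}` has trivial kernel. The selected columns of `W Wᵀ` form `W (Wᵀ)_{:,c}`, which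
has the same column space as `W` because `(Wᵀ)_{:,c}` is invertible. -/

open scoped Matrix.Norms.L2Operator

section VecNorm

variable {m n : ℕ}

lemma vecNorm_eq_norm (v : Fin m → ℝ) : vecNorm v = ‖WithLp.toLp 2 v‖ := by
  simp [vecNorm, EuclideanSpace.norm_eq]

lemma vecNorm_mulVec_le (A : Matrix (Fin m) (Fin n) ℝ) (x : Fin n → ℝ) :
    vecNorm (A *ᵥ x) ≤ ‖A‖ * vecNorm x := by
  simpa [vecNorm_eq_norm] using A.l2_opNorm_mulVec (WithLp.toLp 2 x)

lemma vecNorm_mulVec_le_specNorm (A : Matrix (Fin m) (Fin n) ℝ) {x : Fin n → ℝ}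
    (hx : vecNorm x ≤ 1) : vecNorm (A *ᵥ x) ≤ specNorm A := by
  refine le_csSup ⟨‖A‖, ?_⟩ ⟨x, hx, rfl⟩
  rintro _ ⟨y, hy, rfl⟩
  exact (vecNorm_mulVec_le A y).trans (mul_le_of_le_one_right (norm_nonneg A) hy)

lemma sMin_le_vecNorm_mulVec (A : Matrix (Fin m) (Fin n) ℝ) {x : Fin n → ℝ}
    (hx : vecNorm x = 1) : sMin A ≤ vecNorm (A *ᵥ x) :=
  csInf_le ⟨0, by rintro _ ⟨y, -, rfl⟩; exact Real.sqrt_nonneg _⟩ ⟨x, hx, rfl⟩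

lemma vecNorm_mulVec_of_transpose_mul_self (M : Matrix (Fin m) (Fin n) ℝ) (hM : Mᵀ * M = 1)
    (x : Fin n → ℝ) : vecNorm (M *ᵥ x) = vecNorm x := by
  have hdot : (M *ᵥ x) ⬝ᵥ (M *ᵥ x) = x ⬝ᵥ x := by
    rw [dotProduct_mulVec, ← mulVec_transpose, mulVec_mulVec, hM, one_mulVec, dotProduct_comm]
  simpa [vecNorm, dotProduct, sq] using congrArg Real.sqrt hdot

end VecNorm

lemma vecNorm_transpose_mulVec_le_add_specNorm {n k : ℕ} (W V : Matrix (Fin n) (Fin k) ℝ)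
    (hW : Wᵀ * W = 1) (hV : Vᵀ * V = 1) {y : Fin n → ℝ} (hy : vecNorm y ≤ 1) :
    vecNorm (Vᵀ *ᵥ y) ≤ vecNorm (Wᵀ *ᵥ y) + specNorm (W * Wᵀ - V * Vᵀ) := by
  rw [← vecNorm_mulVec_of_transpose_mul_self V hV, ← vecNorm_mulVec_of_transpose_mul_self W hW,
    mulVec_mulVec, mulVec_mulVec]
  have hsplit : (V * Vᵀ) *ᵥ y = (W * Wᵀ) *ᵥ y - (W * Wᵀ - V * Vᵀ) *ᵥ y := by
    rw [sub_mulVec]; abel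
  calc vecNorm ((V * Vᵀ) *ᵥ y)
      ≤ vecNorm ((W * Wᵀ) *ᵥ y) + vecNorm ((W * Wᵀ - V * Vᵀ) *ᵥ y) := by
        simpa only [hsplit, vecNorm_eq_norm, WithLp.toLp_sub] using norm_sub_le _ _
    _ ≤ vecNorm ((W * Wᵀ) *ᵥ y) + specNorm (W * Wᵀ - V * Vᵀ) := by
        gcongr; exact vecNorm_mulVec_le_specNorm _ hy

lemma isUnit_of_vecNorm_mulVec_pos {k : ℕ} (A : Matrix (Fin k) (Fin k) ℝ)
    (h : ∀ x, vecNorm x = 1 → 0 < vecNorm (A *ᵥ x)) : IsUnit A := by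
  rw [isUnit_iff_isUnit_det, isUnit_iff_ne_zero, Ne, ← exists_mulVec_eq_zero_iff]
  rintro ⟨v, hv, hAv⟩
  have hv' : ‖WithLp.toLp 2 v‖ ≠ 0 := by simpa using hv
  have := h (‖WithLp.toLp 2 v‖⁻¹ • v) (by simp [vecNorm_eq_norm, norm_smul, hv'])
  simp [mulVec_smul, hAv, vecNorm_eq_norm] at this

section Selection

variable {R l m : Type*} [Fintype m] [DecidableEq m] [NonAssocSemiring R]

lemma submatrix_id_eq_mul_one_submatrix {o : Type*} (M : Matrix o m R) (c : l → m) :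
    M.submatrix id c = M * (1 : Matrix m m R).submatrix id c := by
  ext i j; simp [mul_apply, one_apply]

lemma transpose_one_submatrix_mul_self [DecidableEq l] {c : l → m} (hc : Function.Injective c) :
    ((1 : Matrix m m R).submatrix id c)ᵀ * (1 : Matrix m m R).submatrix id c = 1 := by
  ext i j; simp [mul_apply, one_apply, hc.eq_iff]

end Selection

lemma span_range_col_mul_of_isUnit {R m n : Type*} [CommRing R] [Fintype n] [DecidableEq n]
    (M : Matrix m n R) {A : Matrix n n R} (hA : IsUnit A) :
    Submodule.span R (Set.range (M * A).col) = Submodule.span R (Set.range M.col) := by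
  rw [← range_mulVecLin, ← range_mulVecLin, mulVecLin_mul, LinearMap.range_comp_of_range_eq_top]
  exact LinearMap.range_eq_top.mpr (mulVec_surjective_iff_isUnit.mpr hA)

/-- pivoting lemma. If the k×k submatrix of Vᵀ selected by the
injective index map c has smallest singular value > ε ≥ ‖WWᵀ − VVᵀ‖₂, then the
corresponding submatrix of Wᵀ is invertible, and the columns of WWᵀ indexed by
c span the column space of W. -/
theorem pivot_selection
    (n k : ℕ) (ε : ℝ)
    (W V : Matrix (Fin n) (Fin k) ℝ)
    (hW : Wᵀ * W = 1) (hV : Vᵀ * V = 1)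
    (hproj : specNorm (W * Wᵀ - V * Vᵀ) ≤ ε)
    (c : Fin k → Fin n) (hc : Function.Injective c)
    (hσ : ε < sMin ((Vᵀ).submatrix id c)) :
    IsUnit ((Wᵀ).submatrix id c) ∧
      Submodule.span ℝ (Set.range (fun j : Fin k => fun i : Fin n => (W * Wᵀ) i (c j)))
        = Submodule.span ℝ (Set.range (fun j : Fin k => fun i : Fin n => W i j)) := by
  set P := (1 : Matrix (Fin n) (Fin n) ℝ).submatrix id c
  have hunit : IsUnit ((Wᵀ).submatrix id c) := by
    refine isUnit_of_vecNorm_mulVec_pos _ fun x hx => ?_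
    have hPx : vecNorm (P *ᵥ x) ≤ 1 := by
      rw [vecNorm_mulVec_of_transpose_mul_self P (transpose_one_submatrix_mul_self hc), hx]
    have hsel (M : Matrix (Fin k) (Fin n) ℝ) : M.submatrix id c *ᵥ x = M *ᵥ (P *ᵥ x) := by
      rw [mulVec_mulVec, ← submatrix_id_eq_mul_one_submatrix]
    have hσx := sMin_le_vecNorm_mulVec ((Vᵀ).submatrix id c) hx
    have hpert := vecNorm_transpose_mulVec_le_add_specNorm W V hW hV hPx
    rw [hsel] at hσx ⊢
    linarith
  have hcols : (W * Wᵀ).submatrix id c = W * (Wᵀ).submatrix id c := by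
    rw [submatrix_id_eq_mul_one_submatrix (W * Wᵀ), submatrix_id_eq_mul_one_submatrix Wᵀ,
      Matrix.mul_assoc]
  refine ⟨hunit, ?_⟩
  have hspan := span_range_col_mul_of_isUnit W hunit
  rwa [← hcols] at hspan
end

section
/- Let V ∈ ℝ^{n×k̃} have orthonormal columns and W ∈ ℝ^{n×k} have orthonormal columns with exactly one nonzero per row, with k̃ ≤ k. Suppose V = WZ for some Z ∈ ℝ^{k×k̃} with orthonormal columns (ZᵀZ = I_{k̃}). Then for any orthogonal U ∈ O(k̃), the assignment c(i) = argmax over rows of |UᵀVᵀ|_{:,i} is constant on each set 𝒮_j = support of column j of W (assuming the argmax is well-defined, e.g., taking the least such row index). Hence the induced partition of {1,…,n} into at most k̃ clusters never splits any 𝒮_j between two clusters. -/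
open Matrix

lemma Matrix.mul_transpose_apply_of_row_support {R m n o : Type*} [NonUnitalNonAssocSemiring R]
    [Fintype n] (B : Matrix o n R) (W : Matrix m n R) {i : m} {j : n}
    (hsupp : ∀ j', W i j' ≠ 0 → j' = j) (l : o) :
    (B * Wᵀ) l i = B l j * W i j := by
  rw [mul_apply]
  refine Finset.sum_eq_single j (fun j' _ hj' => ?_) (by simp)
  rw [transpose_apply, not_not.mp (mt (hsupp j') hj'), mul_zero]

lemma forall_abs_mul_le_abs_mul_iff {ι : Type*} (v : ι → ℝ) {c : ℝ} (hc : c ≠ 0) (r : ι) :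
    (∀ l, |v l * c| ≤ |v r * c|) ↔ ∀ l, |v l| ≤ |v r| := by
  simp only [abs_mul]
  exact forall_congr' fun l => mul_le_mul_iff_left₀ (abs_pos.mpr hc)

theorem assignment_constant_on_components_general
    (n k ktil : ℕ)
    (W : Matrix (Fin n) (Fin k) ℝ) (Z : Matrix (Fin k) (Fin ktil) ℝ)
    (V : Matrix (Fin n) (Fin ktil) ℝ)
    (hrow : ∀ i : Fin n, ∃! j : Fin k, W i j ≠ 0)
    (hV : V = W * Z) :
    ∀ U : Matrix (Fin ktil) (Fin ktil) ℝ, Uᵀ * U = 1 →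
      ∀ j : Fin k, ∀ i i' : Fin n, W i j ≠ 0 → W i' j ≠ 0 →
        ∀ r : Fin ktil,
          ((∀ l : Fin ktil, |(Uᵀ * Vᵀ) l i| ≤ |(Uᵀ * Vᵀ) r i|) ↔
           (∀ l : Fin ktil, |(Uᵀ * Vᵀ) l i'| ≤ |(Uᵀ * Vᵀ) r i'|)) := by
  intro U _ j i i' hi hi' r
  have hcol : ∀ i, W i j ≠ 0 → ∀ l, (Uᵀ * Vᵀ) l i = (Uᵀ * Zᵀ) l j * W i j := fun i hi l => by
    rw [hV, transpose_mul, ← Matrix.mul_assoc]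
    exact mul_transpose_apply_of_row_support _ _ (fun j' hj' => (hrow i).unique hj' hi) l
  simp only [hcol i hi, hcol i' hi', forall_abs_mul_le_abs_mul_iff _ hi,
    forall_abs_mul_le_abs_mul_iff _ hi']

/-- connected components: W ∈ ℝ^{n×k} has orthonormal columns
with exactly one nonzero per row, V = WZ with Z ∈ ℝ^{k×k̃} having orthonormal
columns, k̃ ≤ k. For any orthogonal U ∈ O(k̃), the argmax-based assignment from
the columns of |UᵀVᵀ| is constant on each support set S_j of a column of W: the
sets of maximizing rows for two columns indexed in the same S_j coincide, hence
the induced partition (with any fixed tie-breaking rule such as taking the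
least maximizing row) never splits an S_j. -/
theorem assignment_constant_on_components
    (n k ktil : ℕ) (hkk : ktil ≤ k)
    (W : Matrix (Fin n) (Fin k) ℝ) (Z : Matrix (Fin k) (Fin ktil) ℝ)
    (V : Matrix (Fin n) (Fin ktil) ℝ)
    (hW : Wᵀ * W = 1)
    (hrow : ∀ i : Fin n, ∃! j : Fin k, W i j ≠ 0)
    (hZ : Zᵀ * Z = 1) (hV : V = W * Z) :
    ∀ U : Matrix (Fin ktil) (Fin ktil) ℝ, Uᵀ * U = 1 →
      ∀ j : Fin k, ∀ i i' : Fin n, W i j ≠ 0 → W i' j ≠ 0 →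
        ∀ r : Fin ktil,
          ((∀ l : Fin ktil, |(Uᵀ * Vᵀ) l i| ≤ |(Uᵀ * Vᵀ) r i|) ↔
           (∀ l : Fin ktil, |(Uᵀ * Vᵀ) l i'| ≤ |(Uᵀ * Vᵀ) r i'|)) :=
  assignment_constant_on_components_general n k ktil W Z V hrow hV
end
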